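/- (Toom cycles give Toom contours.) Let n ≥ 2 be even, V = Z/nZ, and let ψ: V → Z^{d+1} satisfy |ψ_{d+1}(k) − ψ_{d+1}(k−1)| = 1 for all k. Partition V into V_1 (time strictly decreasing through k), V_2 (time strictly increasing through k), V_∗ (local minima of k ↦ ψ_{d+1}(k)), and V_∘ (local maxima). Assume ψ is a Toom cycle: images of elements of V_∗ are distinct from images of all other vertices; images of distinct elements of V_s are distinct for s = 1, 2; and ψ_{d+1}(0) is the unique maximal time coordinate of ψ(V). Define E⃗_1 := {(k, k+1) : ψ_{d+1}(k) > ψ_{d+1}(k+1)} and E⃗_2 := {(k+1, k) : ψ_{d+1}(k) < ψ_{d+1}(k+1)}. Then (V, (E⃗_1, E⃗_2)) is a connected Toom graph with set of sources V_∘, set of sinks V_∗, sets of internal vertices V_1 and V_2, and (V, (E⃗_1, E⃗_2), 0, ψ) is a Toom contour with two charges rooted at ψ(0). -/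
import Mathlib

/-- Directed edges of type `s` entering `v`. -/
def inE {V : Type*} {σ : ℕ} (E : Fin σ → Set (V × V)) (s : Fin σ) (v : V) : Set (V × V) :=
  {e ∈ E s | e.2 = v}

/-- Directed edges of type `s` leaving `v`. -/
def outE {V : Type*} {σ : ℕ} (E : Fin σ → Set (V × V)) (s : Fin σ) (v : V) : Set (V × V) :=
  {e ∈ E s | e.1 = v}

/-- A Toom graph with `σ` charges: every vertex is isolated, a source, a sink,
or an internal vertex of some charge `s`. -/
def IsToomGraph {V : Type*} {σ : ℕ} (E : Fin σ → Set (V × V)) : Prop :=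
  ∀ v : V,
    (∀ s, inE E s v = ∅ ∧ outE E s v = ∅) ∨
    (∀ s, inE E s v = ∅ ∧ (outE E s v).ncard = 1) ∨
    (∀ s, (inE E s v).ncard = 1 ∧ outE E s v = ∅) ∨
    (∃ s, (inE E s v).ncard = 1 ∧ (outE E s v).ncard = 1 ∧
      ∀ l, l ≠ s → inE E l v = ∅ ∧ outE E l v = ∅)

/-- `V_∘`: the set of sources (no incoming edges of any type). -/
def sources {V : Type*} {σ : ℕ} (E : Fin σ → Set (V × V)) : Set V :=
  {v | ∀ s, inE E s v = ∅}

/-- `V_∗`: the set of sinks (no outgoing edges of any type). -/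
def sinks {V : Type*} {σ : ℕ} (E : Fin σ → Set (V × V)) : Set V :=
  {v | ∀ s, outE E s v = ∅}

/-- `V_s`: the set of internal vertices of charge `s`. -/
def internals {V : Type*} {σ : ℕ} (E : Fin σ → Set (V × V)) (s : Fin σ) : Set V :=
  {v | (inE E s v).ncard = 1 ∧ (outE E s v).ncard = 1}

/-- An embedding of a Toom graph into space-time `ℤ^d × ℤ`: time decreases by
exactly `1` along every directed edge, sinks do not overlap with any other
vertex, and internal vertices of the same charge do not overlap. -/
def IsEmbedding {V : Type*} {σ d : ℕ} (E : Fin σ → Set (V × V))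
    (ψ : V → (Fin d → ℤ) × ℤ) : Prop :=
  (∀ s, ∀ e ∈ E s, (ψ e.2).2 = (ψ e.1).2 - 1) ∧
  (∀ v ∈ sinks E, ∀ w : V, w ≠ v → ψ w ≠ ψ v) ∧
  (∀ s : Fin σ, ∀ v ∈ internals E s, ∀ w ∈ internals E s, v ≠ w → ψ v ≠ ψ w)

/-- Undirected adjacency induced by the charged edge sets. -/
def adjE {V : Type*} {σ : ℕ} (E : Fin σ → Set (V × V)) (v w : V) : Prop :=
  ∃ s, (v, w) ∈ E s ∨ (w, v) ∈ E s

/-- The underlying undirected graph is connected. -/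
def IsConnectedGraph {V : Type*} {σ : ℕ} (E : Fin σ → Set (V × V)) : Prop :=
  ∀ v w : V, Relation.ReflTransGen (adjE E) v w

/-- A Toom contour: a connected Toom graph with a designated root source `v₀`,
embedded so that the root has the strictly maximal time coordinate. -/
def IsToomContour {V : Type*} {σ d : ℕ} (E : Fin σ → Set (V × V)) (v₀ : V)
    (ψ : V → (Fin d → ℤ) × ℤ) : Prop :=
  IsToomGraph E ∧ IsConnectedGraph E ∧ v₀ ∈ sources E ∧ IsEmbedding E ψ ∧
  ∀ v : V, ψ v ≠ ψ v₀ → (ψ v).2 < (ψ v₀).2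

/-- `E⃗∗_s`: directed edges of charge `s` starting at an internal vertex of
charge `s` or at the root. -/
def Estar {V : Type*} {σ : ℕ} (E : Fin σ → Set (V × V)) (v₀ : V) (s : Fin σ) :
    Set (V × V) :=
  {e ∈ E s | e.1 ∈ internals E s ∨ e.1 = v₀}

/-- `E⃗∘_s`: directed edges of charge `s` starting at a source other than the
root. -/
def Ecirc {V : Type*} {σ : ℕ} (E : Fin σ → Set (V × V)) (v₀ : V) (s : Fin σ) :
    Set (V × V) :=
  {e ∈ E s | e.1 ∈ sources E ∧ e.1 ≠ v₀}

/-- `V_1`: vertices of the cycle through which time strictly decreases. -/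
def cycV1 {d n : ℕ} (ψ : ZMod n → (Fin d → ℤ) × ℤ) : Set (ZMod n) :=
  {k | (ψ (k - 1)).2 > (ψ k).2 ∧ (ψ k).2 > (ψ (k + 1)).2}

/-- `V_2`: vertices of the cycle through which time strictly increases. -/
def cycV2 {d n : ℕ} (ψ : ZMod n → (Fin d → ℤ) × ℤ) : Set (ZMod n) :=
  {k | (ψ (k - 1)).2 < (ψ k).2 ∧ (ψ k).2 < (ψ (k + 1)).2}

/-- `V_∗`: local minima of the time coordinate along the cycle. -/
def cycVsink {d n : ℕ} (ψ : ZMod n → (Fin d → ℤ) × ℤ) : Set (ZMod n) :=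
  {k | (ψ (k - 1)).2 > (ψ k).2 ∧ (ψ k).2 < (ψ (k + 1)).2}

/-- `V_∘`: local maxima of the time coordinate along the cycle. -/
def cycVsrc {d n : ℕ} (ψ : ZMod n → (Fin d → ℤ) × ℤ) : Set (ZMod n) :=
  {k | (ψ (k - 1)).2 < (ψ k).2 ∧ (ψ k).2 > (ψ (k + 1)).2}

/-- The two charged edge sets of a Toom cycle: `E⃗_1` consists of the downward
steps `(k, k+1)`, and `E⃗_2` of the reversed upward steps `(k+1, k)`. -/
def cycE {d n : ℕ} (ψ : ZMod n → (Fin d → ℤ) × ℤ) : Fin 2 → Set (ZMod n × ZMod n) :=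
  fun s =>
    if s = 0 then {e | ∃ k : ZMod n, e = (k, k + 1) ∧ (ψ k).2 > (ψ (k + 1)).2}
    else {e | ∃ k : ZMod n, e = (k + 1, k) ∧ (ψ k).2 < (ψ (k + 1)).2}


section ToomAux

variable {d n : ℕ} (ψ : ZMod n → (Fin d → ℤ) × ℤ)

lemma zsub_add (x : ZMod n) : x - 1 + 1 = x := by ring

lemma cyc_mem0 (e : ZMod n × ZMod n) :
    e ∈ cycE ψ 0 ↔ e.2 = e.1 + 1 ∧ (ψ e.2).2 < (ψ e.1).2 := by
  obtain ⟨a, b⟩ := e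
  simp only [cycE, if_pos rfl, Set.mem_setOf_eq]
  constructor
  · rintro ⟨k, hk, h⟩
    rw [Prod.mk.injEq] at hk
    obtain ⟨rfl, rfl⟩ := hk
    exact ⟨rfl, h⟩
  · rintro ⟨h1, h2⟩
    obtain rfl : b = a + 1 := h1
    exact ⟨a, rfl, h2⟩

lemma cyc_mem1 (e : ZMod n × ZMod n) :
    e ∈ cycE ψ 1 ↔ e.1 = e.2 + 1 ∧ (ψ e.2).2 < (ψ e.1).2 := by
  obtain ⟨a, b⟩ := e
  simp only [cycE, if_neg (by decide : (1 : Fin 2) ≠ 0), Set.mem_setOf_eq]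
  constructor
  · rintro ⟨k, hk, h⟩
    rw [Prod.mk.injEq] at hk
    obtain ⟨rfl, rfl⟩ := hk
    exact ⟨rfl, h⟩
  · rintro ⟨h1, h2⟩
    obtain rfl : a = b + 1 := h1
    exact ⟨b, rfl, h2⟩

lemma cyc_IN0 (v : ZMod n) :
    inE (cycE ψ) 0 v =
      if (ψ v).2 < (ψ (v - 1)).2 then {((v - 1 : ZMod n), v)} else ∅ := by
  ext ⟨a, b⟩
  simp only [inE, Set.mem_setOf_eq, cyc_mem0]
  split_ifs with h
  · simp only [Set.mem_singleton_iff, Prod.mk.injEq]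
    constructor
    · rintro ⟨⟨rfl, h2⟩, h3⟩
      obtain rfl : a + 1 = v := h3
      exact ⟨by ring, rfl⟩
    · rintro ⟨rfl, rfl⟩
      refine ⟨⟨(zsub_add _).symm, ?_⟩, rfl⟩
      simpa using h
  · simp only [Set.mem_empty_iff_false, iff_false]
    rintro ⟨⟨rfl, h2⟩, h3⟩
    obtain rfl : a + 1 = v := h3
    exact h (by simpa using h2)

lemma cyc_OUT0 (v : ZMod n) :
    outE (cycE ψ) 0 v =
      if (ψ (v + 1)).2 < (ψ v).2 then {(v, (v + 1 : ZMod n))} else ∅ := by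
  ext ⟨a, b⟩
  simp only [outE, Set.mem_setOf_eq, cyc_mem0]
  split_ifs with h
  · simp only [Set.mem_singleton_iff, Prod.mk.injEq]
    constructor
    · rintro ⟨⟨rfl, h2⟩, h3⟩
      obtain rfl : a = v := h3
      exact ⟨rfl, rfl⟩
    · rintro ⟨rfl, rfl⟩
      exact ⟨⟨rfl, h⟩, rfl⟩
  · simp only [Set.mem_empty_iff_false, iff_false]
    rintro ⟨⟨rfl, h2⟩, h3⟩
    obtain rfl : a = v := h3
    exact h h2

lemma cyc_IN1 (v : ZMod n) :
    inE (cycE ψ) 1 v =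
      if (ψ v).2 < (ψ (v + 1)).2 then {((v + 1 : ZMod n), v)} else ∅ := by
  ext ⟨a, b⟩
  simp only [inE, Set.mem_setOf_eq, cyc_mem1]
  split_ifs with h
  · simp only [Set.mem_singleton_iff, Prod.mk.injEq]
    constructor
    · rintro ⟨⟨rfl, h2⟩, h3⟩
      obtain rfl : b = v := h3
      exact ⟨rfl, rfl⟩
    · rintro ⟨rfl, rfl⟩
      exact ⟨⟨rfl, h⟩, rfl⟩
  · simp only [Set.mem_empty_iff_false, iff_false]
    rintro ⟨⟨rfl, h2⟩, h3⟩
    obtain rfl : b = v := h3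
    exact h h2

lemma cyc_OUT1 (v : ZMod n) :
    outE (cycE ψ) 1 v =
      if (ψ (v - 1)).2 < (ψ v).2 then {(v, (v - 1 : ZMod n))} else ∅ := by
  ext ⟨a, b⟩
  simp only [outE, Set.mem_setOf_eq, cyc_mem1]
  split_ifs with h
  · simp only [Set.mem_singleton_iff, Prod.mk.injEq]
    constructor
    · rintro ⟨⟨h1, h2⟩, h3⟩
      obtain rfl : a = v := h3
      obtain rfl : b = a - 1 := by rw [h1]; ring
      exact ⟨rfl, rfl⟩
    · rintro ⟨rfl, rfl⟩
      refine ⟨⟨(zsub_add _).symm, ?_⟩, rfl⟩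
      simpa using h
  · simp only [Set.mem_empty_iff_false, iff_false]
    rintro ⟨⟨h1, h2⟩, h3⟩
    obtain rfl : a = v := h3
    obtain rfl : b = a - 1 := by rw [h1]; ring
    exact h (by simpa using h2)

end ToomAux

/-- Toom cycles give Toom contours: if `ψ : ℤ/nℤ → ℤ^d × ℤ` (with `n ≥ 2` even)
is a Toom cycle, then the associated directed graph with two charges is a
connected Toom graph with sources `V_∘`, sinks `V_∗`, internal vertices `V_1`
and `V_2`, and `(V, (E⃗_1, E⃗_2), 0, ψ)` is a Toom contour rooted at `ψ(0)`. -/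
theorem stmt14 {d n : ℕ} (hn : 2 ≤ n) (hne : Even n)
    (ψ : ZMod n → (Fin d → ℤ) × ℤ)
    (hstep : ∀ k : ZMod n, |(ψ k).2 - (ψ (k - 1)).2| = 1)
    (hsink : ∀ k ∈ cycVsink ψ, ∀ l : ZMod n, l ≠ k → ψ l ≠ ψ k)
    (hint1 : ∀ k ∈ cycV1 ψ, ∀ l ∈ cycV1 ψ, k ≠ l → ψ k ≠ ψ l)
    (hint2 : ∀ k ∈ cycV2 ψ, ∀ l ∈ cycV2 ψ, k ≠ l → ψ k ≠ ψ l)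
    (hmax : ∀ k : ZMod n, ψ k ≠ ψ 0 → (ψ k).2 < (ψ 0).2) :
    IsToomGraph (cycE ψ) ∧
    sources (cycE ψ) = cycVsrc ψ ∧
    sinks (cycE ψ) = cycVsink ψ ∧
    internals (cycE ψ) 0 = cycV1 ψ ∧
    internals (cycE ψ) 1 = cycV2 ψ ∧
    IsToomContour (cycE ψ) 0 ψ := by
  classical
  haveI : NeZero n := ⟨by omega⟩
  -- step structure of the cycle
  have key : ∀ v : ZMod n, (ψ (v + 1)).2 = (ψ v).2 + 1 ∨ (ψ (v + 1)).2 = (ψ v).2 - 1 := by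
    intro v
    have h := hstep (v + 1)
    rw [add_sub_cancel_right] at h
    rcases (abs_eq (by norm_num : (0:ℤ) ≤ 1)).mp h with h | h
    · left; linarith
    · right; linarith
  have key' : ∀ v : ZMod n, (ψ v).2 = (ψ (v - 1)).2 + 1 ∨ (ψ v).2 = (ψ (v - 1)).2 - 1 := by
    intro v
    have h := key (v - 1)
    rwa [zsub_add] at h
  -- singleton / empty computations
  have n0 : ∀ v : ZMod n, (ψ v).2 < (ψ (v - 1)).2 → (inE (cycE ψ) 0 v).ncard = 1 := by
    intro v h; rw [cyc_IN0, if_pos h]; exact Set.ncard_singleton _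
  have z0 : ∀ v : ZMod n, ¬(ψ v).2 < (ψ (v - 1)).2 → inE (cycE ψ) 0 v = ∅ := by
    intro v h; rw [cyc_IN0, if_neg h]
  have nO0 : ∀ v : ZMod n, (ψ (v + 1)).2 < (ψ v).2 → (outE (cycE ψ) 0 v).ncard = 1 := by
    intro v h; rw [cyc_OUT0, if_pos h]; exact Set.ncard_singleton _
  have zO0 : ∀ v : ZMod n, ¬(ψ (v + 1)).2 < (ψ v).2 → outE (cycE ψ) 0 v = ∅ := by
    intro v h; rw [cyc_OUT0, if_neg h]
  have n1 : ∀ v : ZMod n, (ψ v).2 < (ψ (v + 1)).2 → (inE (cycE ψ) 1 v).ncard = 1 := by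
    intro v h; rw [cyc_IN1, if_pos h]; exact Set.ncard_singleton _
  have z1 : ∀ v : ZMod n, ¬(ψ v).2 < (ψ (v + 1)).2 → inE (cycE ψ) 1 v = ∅ := by
    intro v h; rw [cyc_IN1, if_neg h]
  have nO1 : ∀ v : ZMod n, (ψ (v - 1)).2 < (ψ v).2 → (outE (cycE ψ) 1 v).ncard = 1 := by
    intro v h; rw [cyc_OUT1, if_pos h]; exact Set.ncard_singleton _
  have zO1 : ∀ v : ZMod n, ¬(ψ (v - 1)).2 < (ψ v).2 → outE (cycE ψ) 1 v = ∅ := by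
    intro v h; rw [cyc_OUT1, if_neg h]
  -- converses
  have c0 : ∀ v : ZMod n, inE (cycE ψ) 0 v = ∅ → ¬(ψ v).2 < (ψ (v - 1)).2 := by
    intro v hv hc; rw [cyc_IN0, if_pos hc] at hv; exact Set.singleton_ne_empty _ hv
  have cO0 : ∀ v : ZMod n, outE (cycE ψ) 0 v = ∅ → ¬(ψ (v + 1)).2 < (ψ v).2 := by
    intro v hv hc; rw [cyc_OUT0, if_pos hc] at hv; exact Set.singleton_ne_empty _ hv
  have c1 : ∀ v : ZMod n, inE (cycE ψ) 1 v = ∅ → ¬(ψ v).2 < (ψ (v + 1)).2 := by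
    intro v hv hc; rw [cyc_IN1, if_pos hc] at hv; exact Set.singleton_ne_empty _ hv
  have cO1 : ∀ v : ZMod n, outE (cycE ψ) 1 v = ∅ → ¬(ψ (v - 1)).2 < (ψ v).2 := by
    intro v hv hc; rw [cyc_OUT1, if_pos hc] at hv; exact Set.singleton_ne_empty _ hv
  have cn0 : ∀ v : ZMod n, (inE (cycE ψ) 0 v).ncard = 1 → (ψ v).2 < (ψ (v - 1)).2 := by
    intro v hv; by_contra hc; rw [z0 v hc] at hv; simp at hv
  have cnO0 : ∀ v : ZMod n, (outE (cycE ψ) 0 v).ncard = 1 → (ψ (v + 1)).2 < (ψ v).2 := by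
    intro v hv; by_contra hc; rw [zO0 v hc] at hv; simp at hv
  have cn1 : ∀ v : ZMod n, (inE (cycE ψ) 1 v).ncard = 1 → (ψ v).2 < (ψ (v + 1)).2 := by
    intro v hv; by_contra hc; rw [z1 v hc] at hv; simp at hv
  have cnO1 : ∀ v : ZMod n, (outE (cycE ψ) 1 v).ncard = 1 → (ψ (v - 1)).2 < (ψ v).2 := by
    intro v hv; by_contra hc; rw [zO1 v hc] at hv; simp at hv
  -- the graph is a Toom graph
  have hgraph : IsToomGraph (cycE ψ) := by
    intro v
    rcases key' v with hL | hL <;> rcases key v with hR | hR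
    · -- time increases through v : internal of charge 1
      refine Or.inr (Or.inr (Or.inr ⟨1, n1 v (by linarith), nO1 v (by linarith), ?_⟩))
      intro l hl
      fin_cases l
      · exact ⟨z0 v (by linarith), zO0 v (by linarith)⟩
      · exact absurd rfl hl
    · -- local maximum : source
      refine Or.inr (Or.inl ?_)
      intro s
      fin_cases s
      · exact ⟨z0 v (by linarith), nO0 v (by linarith)⟩
      · exact ⟨z1 v (by linarith), nO1 v (by linarith)⟩
    · -- local minimum : sink
      refine Or.inr (Or.inr (Or.inl ?_))
      intro s
      fin_cases s
      · exact ⟨n0 v (by linarith), zO0 v (by linarith)⟩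
      · exact ⟨n1 v (by linarith), zO1 v (by linarith)⟩
    · -- time decreases through v : internal of charge 0
      refine Or.inr (Or.inr (Or.inr ⟨0, n0 v (by linarith), nO0 v (by linarith), ?_⟩))
      intro l hl
      fin_cases l
      · exact absurd rfl hl
      · exact ⟨z1 v (by linarith), zO1 v (by linarith)⟩
  -- identification of sources, sinks and internal vertices
  have hsrc : sources (cycE ψ) = cycVsrc ψ := by
    ext v
    constructor
    · intro hv
      have h0 := c0 v (hv 0)
      have h1 := c1 v (hv 1)
      constructor
      · rcases key' v with hL | hL
        · exact (by linarith : (ψ (v - 1)).2 < (ψ v).2)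
        · exact absurd (by linarith : (ψ v).2 < (ψ (v - 1)).2) h0
      · rcases key v with hR | hR
        · exact absurd (by linarith : (ψ v).2 < (ψ (v + 1)).2) h1
        · exact (by linarith : (ψ (v + 1)).2 < (ψ v).2)
    · rintro ⟨h1, h2⟩ s
      fin_cases s
      · exact z0 v (by exact fun hc => absurd h1 (by linarith))
      · exact z1 v (by exact fun hc => absurd h2 (by linarith))
  have hsnk : sinks (cycE ψ) = cycVsink ψ := by
    ext v
    constructor
    · intro hv
      have h0 := cO0 v (hv 0)
      have h1 := cO1 v (hv 1)
      constructor
      · rcases key' v with hL | hL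
        · exact absurd (by linarith : (ψ (v - 1)).2 < (ψ v).2) h1
        · exact (by linarith : (ψ v).2 < (ψ (v - 1)).2)
      · rcases key v with hR | hR
        · exact (by linarith : (ψ v).2 < (ψ (v + 1)).2)
        · exact absurd (by linarith : (ψ (v + 1)).2 < (ψ v).2) h0
    · rintro ⟨h1, h2⟩ s
      fin_cases s
      · exact zO0 v (by exact fun hc => absurd h2 (by linarith))
      · exact zO1 v (by exact fun hc => absurd h1 (by linarith))
  have hI0 : internals (cycE ψ) 0 = cycV1 ψ := by
    ext v
    constructor
    · rintro ⟨h1, h2⟩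
      exact ⟨cn0 v h1, cnO0 v h2⟩
    · rintro ⟨h1, h2⟩
      exact ⟨n0 v h1, nO0 v h2⟩
  have hI1 : internals (cycE ψ) 1 = cycV2 ψ := by
    ext v
    constructor
    · rintro ⟨h1, h2⟩
      exact ⟨cnO1 v h2, cn1 v h1⟩
    · rintro ⟨h1, h2⟩
      exact ⟨n1 v h2, nO1 v h1⟩
  -- the root is a local maximum
  have hroot : (0 : ZMod n) ∈ cycVsrc ψ := by
    constructor
    · rcases key' 0 with hL | hL
      · linarith
      · exfalso
        have hne0 : ψ ((0 : ZMod n) - 1) ≠ ψ 0 := by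
          intro heq
          have := congrArg Prod.snd heq
          omega
        have := hmax _ hne0
        omega
    · rcases key 0 with hR | hR
      · exfalso
        have hne0 : ψ ((0 : ZMod n) + 1) ≠ ψ 0 := by
          intro heq
          have := congrArg Prod.snd heq
          omega
        have := hmax _ hne0
        omega
      · linarith
  -- connectivity
  have adj : ∀ v : ZMod n, adjE (cycE ψ) v (v + 1) := by
    intro v
    rcases key v with h | h
    · exact ⟨1, Or.inr ((cyc_mem1 ψ (v + 1, v)).mpr ⟨rfl, by linarith⟩)⟩
    · exact ⟨0, Or.inl ((cyc_mem0 ψ (v, v + 1)).mpr ⟨rfl, by linarith⟩)⟩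
  have hconn : IsConnectedGraph (cycE ψ) := by
    have step : ∀ (m : ℕ) (v : ZMod n),
        Relation.ReflTransGen (adjE (cycE ψ)) v (v + (m : ZMod n)) := by
      intro m
      induction m with
      | zero => intro v; simpa using Relation.ReflTransGen.refl
      | succ m ih =>
          intro v
          have h2 : (v + ((m + 1 : ℕ) : ZMod n)) = (v + (m : ZMod n)) + 1 := by
            push_cast; ring
          rw [h2]
          exact (ih v).tail (adj (v + (m : ZMod n)))
    intro v w
    have hw : v + (((w - v).val : ℕ) : ZMod n) = w := by
      rw [ZMod.natCast_val, ZMod.cast_id]; ring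
    exact hw ▸ step _ v
  refine ⟨hgraph, hsrc, hsnk, hI0, hI1, hgraph, hconn, ?_, ⟨?_, ?_, ?_⟩, hmax⟩
  · rw [hsrc]; exact hroot
  · -- time decreases along edges
    intro s e he
    obtain ⟨a, b⟩ := e
    fin_cases s
    · obtain ⟨h1, h2⟩ := (cyc_mem0 ψ (a, b)).mp he
      obtain rfl : b = a + 1 := h1
      have h2' : (ψ (a + 1)).2 < (ψ a).2 := h2
      show (ψ (a + 1)).2 = (ψ a).2 - 1
      rcases key a with h | h <;> omega
    · obtain ⟨h1, h2⟩ := (cyc_mem1 ψ (a, b)).mp he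
      obtain rfl : a = b + 1 := h1
      have h2' : (ψ b).2 < (ψ (b + 1)).2 := h2
      show (ψ b).2 = (ψ (b + 1)).2 - 1
      rcases key b with h | h <;> omega
  · -- sinks do not overlap anything
    rw [hsnk]
    exact hsink
  · -- internal vertices of the same charge do not overlap
    intro s
    fin_cases s
    · show ∀ v ∈ internals (cycE ψ) 0, ∀ w ∈ internals (cycE ψ) 0, v ≠ w → ψ v ≠ ψ w
      rw [hI0]; exact hint1
    · show ∀ v ∈ internals (cycE ψ) 1, ∀ w ∈ internals (cycE ψ) 1, v ≠ w → ψ v ≠ ψ w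
      rw [hI1]; exact hint2
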